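/- Let Y be a stationary process on a finite alphabet 𝒴 and let r: 𝒴^k → 𝒴 be any predictor with error probability P_e := Pr( r(Y_1^k) ≠ Y_{k+1} ). Then I(Y_{k+1}; Y_1^k) ≥ I(Y_{k+1}; r(Y_1^k)) ≥ −log( max_{y ∈ 𝒴} p_Y(y) ) · (1 − P_e) − h(P_e), where h(p) := −p log p − (1−p) log(1−p) is the binary entropy function and p_Y is the marginal distribution of Y_1. -/

import Mathlib

open MeasureTheory Filter

section Processes

variable {Ω : Type*} [MeasurableSpace Ω]

/-- The segment (Z_m, ..., Z_{m+n-1}) of a discrete-time process (0-based indexing, so that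
`procSeg Z 0 n` is the block Z_1^n of the paper). -/
def procSeg {𝒵 : Type*} (Z : ℕ → Ω → 𝒵) (m n : ℕ) : Ω → Fin n → 𝒵 :=
  fun ω i => Z (m + i.val) ω

/-- The probability that the observable `W` takes the value `a`. -/
noncomputable def prOf {α : Type*} (μ : Measure Ω) (W : Ω → α) (a : α) : ℝ :=
  (μ (W ⁻¹' {a})).toReal

/-- Shannon entropy of a finitely-valued observable. -/
noncomputable def entOf {α : Type*} [Fintype α] (μ : Measure Ω) (W : Ω → α) : ℝ :=
  ∑ a : α, Real.negMulLog (prOf μ W a)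

/-- Conditional Shannon entropy H(A | B). -/
noncomputable def condEntOf {α β : Type*} [Fintype α] [Fintype β] (μ : Measure Ω)
    (A : Ω → α) (B : Ω → β) : ℝ :=
  entOf μ (fun ω => (A ω, B ω)) - entOf μ B

/-- Mutual information I(A ; B). -/
noncomputable def mutInfOf {α β : Type*} [Fintype α] [Fintype β] (μ : Measure Ω)
    (A : Ω → α) (B : Ω → β) : ℝ :=
  entOf μ A + entOf μ B - entOf μ (fun ω => (A ω, B ω))

/-- A process with finite alphabet is stationary iff all its finite-dimensional distributions
are invariant under the time shift. -/
def StationaryProc {𝒵 : Type*} (μ : Measure Ω) (Z : ℕ → Ω → 𝒵) : Prop :=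
  ∀ n : ℕ, ∀ z : Fin n → 𝒵,
    μ {ω | ∀ i : Fin n, Z i.val ω = z i} = μ {ω | ∀ i : Fin n, Z (i.val + 1) ω = z i}

/-- `Z` is a (time-homogeneous) `k`-th order Markov chain with transition matrix `P`:
for every n ≥ k, Z_{n+1} is conditionally independent of Z_1^{n-k} given Z_{n-k+1}^n, and the
conditional probabilities are given by `P` (time-homogeneity). -/
def IsMarkovOrder {𝒵 : Type*} (μ : Measure Ω) (Z : ℕ → Ω → 𝒵) (k : ℕ)
    (P : (Fin k → 𝒵) → 𝒵 → ℝ) : Prop :=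
  ∀ n : ℕ, ∀ hn : k ≤ n, ∀ z : Fin n → 𝒵, ∀ j : 𝒵,
    prOf μ (procSeg Z 0 (n + 1)) (Fin.snoc z j) =
      prOf μ (procSeg Z 0 n) z *
        P (fun i : Fin k => z ⟨n - k + i.val, by have := i.isLt; omega⟩) j

end Processes

/-!
Mutual information is the relative entropy of the joint law of `(A, B)` with respect to the
product of the marginals. Applying a map to `B`, or collapsing the pair to the indicator of
`A = B`, pushes both laws forward along the same map, and the log-sum inequality, applied on each
fibre, shows that relative entropy can only decrease. On the indicator the product law gives
`A = B` the mass `∑ y, p_A y * p_B y ≤ max p_A`, which yields Fano's bound; stationarity gives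
`p_{Y_{k+1}} = p_{Y_1}`.
-/

open Finset Real

/-- `klTerm a 0` is a junk value (`log 0 = 0`), so lemmas about it assume `b = 0 → a = 0`. -/
noncomputable def klTerm (a b : ℝ) : ℝ := a * (log a - log b)

@[simp] lemma klTerm_zero_left (b : ℝ) : klTerm 0 b = 0 := by simp [klTerm]

lemma klTerm_le_klTerm_of_le {a b c : ℝ} (ha : 0 ≤ a) (hb : 0 ≤ b) (hbc : b ≤ c)
    (hab : b = 0 → a = 0) : klTerm a c ≤ klTerm a b := by
  rcases ha.eq_or_lt with rfl | ha
  · simp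
  have hb : 0 < b := hb.lt_of_ne fun h => ha.ne' (hab h.symm)
  unfold klTerm
  gcongr

/-- Gibbs' tangent-line bound, from `log x ≥ 1 - 1/x` at `x = a / (b t)`. -/
lemma mul_log_add_sub_le_klTerm {a b t : ℝ} (ha : 0 ≤ a) (hb : 0 ≤ b) (ht : 0 < t)
    (hab : b = 0 → a = 0) : a * log t + a - b * t ≤ klTerm a b := by
  rcases ha.eq_or_lt with rfl | ha
  · simp only [zero_mul, zero_add, klTerm_zero_left, zero_sub, neg_nonpos]
    positivity
  have hb : 0 < b := hb.lt_of_ne fun h => ha.ne' (hab h.symm)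
  have key := one_sub_inv_le_log_of_pos (x := a / (b * t)) (by positivity)
  rw [log_div ha.ne' (by positivity), log_mul hb.ne' ht.ne', inv_div] at key
  have := mul_le_mul_of_nonneg_left key ha.le
  unfold klTerm
  rw [mul_sub, mul_one, mul_div_cancel₀ _ ha.ne'] at this
  linarith

lemma sum_eq_zero_of_forall_eq_zero_imp {ι : Type*} {s : Finset ι} {F G : ι → ℝ}
    (hG : ∀ i ∈ s, 0 ≤ G i) (hFG : ∀ i ∈ s, G i = 0 → F i = 0) (h : ∑ i ∈ s, G i = 0) :
    ∑ i ∈ s, F i = 0 :=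
  sum_eq_zero fun i hi => hFG i hi ((sum_eq_zero_iff_of_nonneg hG).1 h i hi)

lemma klTerm_sum_le_sum_klTerm {ι : Type*} (s : Finset ι) {F G : ι → ℝ}
    (hF : ∀ i ∈ s, 0 ≤ F i) (hG : ∀ i ∈ s, 0 ≤ G i) (hFG : ∀ i ∈ s, G i = 0 → F i = 0) :
    klTerm (∑ i ∈ s, F i) (∑ i ∈ s, G i) ≤ ∑ i ∈ s, klTerm (F i) (G i) := by
  set A := ∑ i ∈ s, F i
  set B := ∑ i ∈ s, G i
  rcases (sum_nonneg hF : 0 ≤ A).eq_or_lt with hA | hA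
  · have hF0 := (sum_eq_zero_iff_of_nonneg hF).1 hA.symm
    rw [show A = 0 from hA.symm, klTerm_zero_left,
      sum_eq_zero fun i hi => by rw [hF0 i hi, klTerm_zero_left]]
  have hB : 0 < B := (sum_nonneg hG).lt_of_ne fun hB =>
    hA.ne' (sum_eq_zero_of_forall_eq_zero_imp hG hFG hB.symm)
  calc klTerm A B = A * log (A / B) + A - B * (A / B) := by
        rw [klTerm, log_div hA.ne' hB.ne', mul_div_cancel₀ _ hB.ne']; ring
    _ = ∑ i ∈ s, (F i * log (A / B) + F i - G i * (A / B)) := by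
        simp only [sum_sub_distrib, sum_add_distrib, ← sum_mul]; rfl
    _ ≤ ∑ i ∈ s, klTerm (F i) (G i) :=
        sum_le_sum fun i hi =>
          mul_log_add_sub_le_klTerm (hF i hi) (hG i hi) (by positivity) (hFG i hi)

lemma sum_klTerm_fiberwise_le {α β : Type*} [Fintype α] [Fintype β] [DecidableEq β]
    {F G : α → ℝ} (g : α → β) (hF : ∀ a, 0 ≤ F a) (hG : ∀ a, 0 ≤ G a)
    (hFG : ∀ a, G a = 0 → F a = 0) :
    ∑ b, klTerm (∑ a with g a = b, F a) (∑ a with g a = b, G a) ≤ ∑ a, klTerm (F a) (G a) := by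
  rw [← sum_fiberwise univ g]
  exact sum_le_sum fun b _ =>
    klTerm_sum_le_sum_klTerm _ (fun a _ => hF a) (fun a _ => hG a) (fun a _ => hFG a)

section Observables

variable {Ω α β γ : Type*} [MeasurableSpace Ω]

lemma prOf_nonneg (μ : Measure Ω) (W : Ω → α) (a : α) : 0 ≤ prOf μ W a :=
  ENNReal.toReal_nonneg

lemma prOf_pair_eq_zero_of_mul_eq_zero (μ : Measure Ω) [IsFiniteMeasure μ] (A : Ω → α)
    (B : Ω → β) {p : α × β} (h : prOf μ A p.1 * prOf μ B p.2 = 0) :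
    prOf μ (fun ω => (A ω, B ω)) p = 0 := by
  refine le_antisymm ?_ (prOf_nonneg μ _ p)
  rcases mul_eq_zero.1 h with h | h <;> rw [← h] <;>
    exact ENNReal.toReal_mono (measure_ne_top _ _) (measure_mono fun ω hω => by
      simp only [Set.mem_preimage, Set.mem_singleton_iff] at hω ⊢; rw [← hω])

variable [MeasurableSpace α] [MeasurableSingletonClass α]

lemma prOf_eq_of_map_eq (μ : Measure Ω) {V W : Ω → α} (hV : Measurable V) (hW : Measurable W)
    (h : μ.map V = μ.map W) : prOf μ V = prOf μ W := by
  ext a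
  simp only [prOf, ← Measure.map_apply hV (measurableSet_singleton a), h,
    Measure.map_apply hW (measurableSet_singleton a)]

variable [Fintype α]

lemma prOf_comp_eq_sum [DecidableEq β] (μ : Measure Ω) [IsFiniteMeasure μ]
    {V : Ω → α} (hV : Measurable V) (g : α → β) (b : β) :
    prOf μ (fun ω => g (V ω)) b = ∑ a with g a = b, prOf μ V a := by
  simp only [prOf]
  rw [← ENNReal.toReal_sum fun _ _ => measure_ne_top _ _,
    sum_measure_preimage_singleton _ fun a _ => hV (measurableSet_singleton a)]
  congr 2
  ext ω
  simp

lemma sum_prOf_eq_one (μ : Measure Ω) [IsProbabilityMeasure μ] {V : Ω → α}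
    (hV : Measurable V) : ∑ a, prOf μ V a = 1 := by
  simp only [prOf]
  rw [← ENNReal.toReal_sum fun _ _ => measure_ne_top _ _,
    sum_measure_preimage_singleton _ fun a _ => hV (measurableSet_singleton a)]
  simp

lemma prOf_mul_prOf_comp_eq_sum [Fintype γ] [DecidableEq γ] [DecidableEq β] (μ : Measure Ω)
    [IsFiniteMeasure μ] (A : Ω → γ) {B : Ω → α} (hB : Measurable B) (g : α → β) (q : γ × β) :
    prOf μ A q.1 * prOf μ (fun ω => g (B ω)) q.2 =
      ∑ p with Prod.map id g p = q, prOf μ A p.1 * prOf μ B p.2 := by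
  rw [prOf_comp_eq_sum μ hB]
  simp [sum_filter, Fintype.sum_prod_type, Prod.ext_iff, ite_and, mul_sum]

lemma sum_prOf_mul_prOf_le (μ : Measure Ω) [IsProbabilityMeasure μ] (A : Ω → α) {B : Ω → α}
    (hB : Measurable B) {c : ℝ} (hc : ∀ x, prOf μ A x ≤ c) :
    ∑ x, prOf μ A x * prOf μ B x ≤ c := calc
  ∑ x, prOf μ A x * prOf μ B x ≤ ∑ x, c * prOf μ B x :=
    sum_le_sum fun x _ => mul_le_mul_of_nonneg_right (hc x) (prOf_nonneg ..)
  _ = c := by rw [← mul_sum, sum_prOf_eq_one μ hB, mul_one]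

variable [MeasurableSpace β] [MeasurableSingletonClass β] [Fintype β]

lemma prOf_eq_sum_prOf_pair_left (μ : Measure Ω) [IsFiniteMeasure μ] {A : Ω → α} {B : Ω → β}
    (hA : Measurable A) (hB : Measurable B) (x : α) :
    prOf μ A x = ∑ y, prOf μ (fun ω => (A ω, B ω)) (x, y) := by
  classical
  rw [show prOf μ A x = prOf μ (fun ω => (A ω, B ω).1) x from rfl,
    prOf_comp_eq_sum μ (hA.prodMk hB)]
  simp [sum_filter, Fintype.sum_prod_type_right]

lemma prOf_eq_sum_prOf_pair_right (μ : Measure Ω) [IsFiniteMeasure μ] {A : Ω → α} {B : Ω → β}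
    (hA : Measurable A) (hB : Measurable B) (y : β) :
    prOf μ B y = ∑ x, prOf μ (fun ω => (A ω, B ω)) (x, y) := by
  classical
  rw [show prOf μ B y = prOf μ (fun ω => (A ω, B ω).2) y from rfl,
    prOf_comp_eq_sum μ (hA.prodMk hB)]
  simp [sum_filter, Fintype.sum_prod_type]

lemma sum_prOf_mul_prOf_eq_one (μ : Measure Ω) [IsProbabilityMeasure μ] {A : Ω → α}
    {B : Ω → β} (hA : Measurable A) (hB : Measurable B) :
    ∑ p : α × β, prOf μ A p.1 * prOf μ B p.2 = 1 := by
  rw [Fintype.sum_prod_type, ← Fintype.sum_mul_sum, sum_prOf_eq_one μ hA, sum_prOf_eq_one μ hB,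
    mul_one]

lemma mutInfOf_eq_sum_klTerm (μ : Measure Ω) [IsFiniteMeasure μ] {A : Ω → α} {B : Ω → β}
    (hA : Measurable A) (hB : Measurable B) :
    mutInfOf μ A B = ∑ p : α × β,
      klTerm (prOf μ (fun ω => (A ω, B ω)) p) (prOf μ A p.1 * prOf μ B p.2) := by
  set P := prOf μ (fun ω => (A ω, B ω))
  have hterm : ∀ p : α × β, klTerm (P p) (prOf μ A p.1 * prOf μ B p.2) =
      P p * log (P p) - P p * log (prOf μ A p.1) - P p * log (prOf μ B p.2) := by
    intro p
    by_cases hP : P p = 0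
    · simp [hP]
    have hAB := mul_ne_zero_iff.1 fun h => hP (prOf_pair_eq_zero_of_mul_eq_zero μ A B h)
    rw [klTerm, log_mul hAB.1 hAB.2]
    ring
  have hA_marg : ∑ p : α × β, P p * log (prOf μ A p.1) = -entOf μ A := by
    rw [Fintype.sum_prod_type, entOf, ← sum_neg_distrib]
    refine sum_congr rfl fun x _ => ?_
    dsimp only
    rw [← sum_mul, negMulLog, neg_mul, neg_neg, prOf_eq_sum_prOf_pair_left μ hA hB x]
  have hB_marg : ∑ p : α × β, P p * log (prOf μ B p.2) = -entOf μ B := by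
    rw [Fintype.sum_prod_type_right, entOf, ← sum_neg_distrib]
    refine sum_congr rfl fun y _ => ?_
    dsimp only
    rw [← sum_mul, negMulLog, neg_mul, neg_neg, prOf_eq_sum_prOf_pair_right μ hA hB y]
  simp only [hterm, sum_sub_distrib, hA_marg, hB_marg, mutInfOf, entOf, negMulLog, neg_mul,
    sum_neg_distrib]
  ring

theorem mutInfOf_comp_le [MeasurableSpace γ] [MeasurableSingletonClass γ] [Fintype γ]
    (μ : Measure Ω) [IsFiniteMeasure μ] {A : Ω → α} {B : Ω → β}
    (hA : Measurable A) (hB : Measurable B) (g : β → γ) :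
    mutInfOf μ A (fun ω => g (B ω)) ≤ mutInfOf μ A B := by
  classical
  rw [mutInfOf_eq_sum_klTerm μ hA (B := fun ω => g (B ω)) ((measurable_of_finite g).comp hB),
    mutInfOf_eq_sum_klTerm μ hA hB]
  have hjoint : ∀ q : α × γ, prOf μ (fun ω => (A ω, g (B ω))) q =
      ∑ p with Prod.map id g p = q, prOf μ (fun ω => (A ω, B ω)) p :=
    prOf_comp_eq_sum μ (hA.prodMk hB) (Prod.map id g)
  simp only [hjoint, prOf_mul_prOf_comp_eq_sum μ A hB g]
  exact sum_klTerm_fiberwise_le (Prod.map id g) (fun _ => prOf_nonneg ..)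
    (fun _ => mul_nonneg (prOf_nonneg ..) (prOf_nonneg ..))
    (fun _ => prOf_pair_eq_zero_of_mul_eq_zero μ A B)

end Observables

theorem neg_log_mul_sub_binEntropy_le_mutInfOf {Ω α : Type*} [MeasurableSpace Ω]
    [MeasurableSpace α] [MeasurableSingletonClass α] [Fintype α]
    (μ : Measure Ω) [IsProbabilityMeasure μ]
    {A B : Ω → α} (hA : Measurable A) (hB : Measurable B) {c : ℝ} (hc : ∀ x, prOf μ A x ≤ c) :
    -log c * (1 - (μ {ω | B ω ≠ A ω}).toReal) - binEntropy (μ {ω | B ω ≠ A ω}).toReal ≤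
      mutInfOf μ A B := by
  classical
  set e := (μ {ω | B ω ≠ A ω}).toReal
  set P := prOf μ (fun ω => (A ω, B ω))
  set Q := fun p : α × α => prOf μ A p.1 * prOf μ B p.2
  set D := fun p : α × α => decide (p.1 = p.2)
  have hQ_nonneg p : 0 ≤ Q p := mul_nonneg (prOf_nonneg ..) (prOf_nonneg ..)
  have hPQ p : Q p = 0 → P p = 0 := prOf_pair_eq_zero_of_mul_eq_zero μ A B
  have hD b : ∑ p with D p = b, P p = prOf μ (fun ω => D (A ω, B ω)) b :=
    (prOf_comp_eq_sum μ (hA.prodMk hB) D b).symm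
  have hD_false : prOf μ (fun ω => D (A ω, B ω)) false = e := by
    simp only [prOf, e, D]
    congr 2
    ext ω
    simp [eq_comm]
  have hD_true : prOf μ (fun ω => D (A ω, B ω)) true = 1 - e := by
    have := sum_prOf_eq_one μ (V := fun ω => D (A ω, B ω))
      ((measurable_of_finite D).comp (hA.prodMk hB))
    rw [Fintype.sum_bool] at this
    linarith
  have hQ_true : ∑ p with D p = true, Q p ≤ c := by
    simpa [Q, D, sum_filter, Fintype.sum_prod_type] using sum_prOf_mul_prOf_le μ A hB hc
  have hQ_false : ∑ p with D p = false, Q p ≤ 1 :=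
    (sum_le_sum_of_subset_of_nonneg (filter_subset _ _) fun p _ _ => hQ_nonneg p).trans
      (sum_prOf_mul_prOf_eq_one μ hA hB).le
  have hPQ_fiber b : ∑ p with D p = b, Q p = 0 → ∑ p with D p = b, P p = 0 :=
    sum_eq_zero_of_forall_eq_zero_imp (fun p _ => hQ_nonneg p) fun p _ => hPQ p
  have h_true := klTerm_le_klTerm_of_le (sum_nonneg fun p _ => prOf_nonneg ..)
    (sum_nonneg fun p _ => hQ_nonneg p) hQ_true (hPQ_fiber true)
  have h_false := klTerm_le_klTerm_of_le (sum_nonneg fun p _ => prOf_nonneg ..)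
    (sum_nonneg fun p _ => hQ_nonneg p) hQ_false (hPQ_fiber false)
  calc -log c * (1 - e) - binEntropy e = klTerm (1 - e) c + klTerm e 1 := by
        rw [binEntropy_eq_negMulLog_add_negMulLog_one_sub, klTerm, klTerm, negMulLog, negMulLog,
          log_one]
        ring
    _ ≤ ∑ b, klTerm (∑ p with D p = b, P p) (∑ p with D p = b, Q p) := by
        rw [Fintype.sum_bool, ← hD_true, ← hD_false, ← hD, ← hD]
        exact add_le_add h_true h_false
    _ ≤ ∑ p, klTerm (P p) (Q p) :=
        sum_klTerm_fiberwise_le D (fun _ => prOf_nonneg ..) hQ_nonneg hPQ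
    _ = mutInfOf μ A B := (mutInfOf_eq_sum_klTerm μ hA hB).symm

section Stationarity

variable {Ω 𝒵 : Type*} [MeasurableSpace Ω] [MeasurableSpace 𝒵] {Z : ℕ → Ω → 𝒵}

lemma measurable_procSeg (hZ : ∀ n, Measurable (Z n)) (m n : ℕ) : Measurable (procSeg Z m n) :=
  measurable_pi_lambda _ fun _ => hZ _

variable [MeasurableSingletonClass 𝒵] [Countable 𝒵] {μ : Measure Ω}

lemma StationaryProc.map_procSeg_one (hstat : StationaryProc μ Z) (hZ : ∀ n, Measurable (Z n))
    (n : ℕ) : μ.map (procSeg Z 1 n) = μ.map (procSeg Z 0 n) := by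
  refine Measure.ext_of_singleton fun z => ?_
  rw [Measure.map_apply (measurable_procSeg hZ 1 n) (measurableSet_singleton z),
    Measure.map_apply (measurable_procSeg hZ 0 n) (measurableSet_singleton z)]
  convert (hstat n z).symm using 2 <;> ext ω <;> simp [procSeg, funext_iff, add_comm]

lemma StationaryProc.map_eq_map_zero (hstat : StationaryProc μ Z) (hZ : ∀ n, Measurable (Z n))
    (n : ℕ) : μ.map (Z n) = μ.map (Z 0) := by
  induction n with
  | zero => rfl
  | succ n ih =>
    have hlast m : Z (m + n) = (fun z => z (Fin.last n)) ∘ procSeg Z m (n + 1) := rfl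
    have heval : Measurable fun z : Fin (n + 1) → 𝒵 => z (Fin.last n) := measurable_pi_apply _
    rw [← ih, show n + 1 = 1 + n by ring, hlast,
      ← Measure.map_map heval (measurable_procSeg hZ 1 _), hstat.map_procSeg_one hZ,
      Measure.map_map heval (measurable_procSeg hZ 0 _), ← hlast, zero_add]

end Stationarity

theorem stmt8_general {Ω : Type*} [MeasurableSpace Ω]
    {𝒴 : Type*} [Fintype 𝒴] [Nonempty 𝒴]
    [MeasurableSpace 𝒴] [MeasurableSingletonClass 𝒴]
    (μ : Measure Ω) [IsProbabilityMeasure μ] (Y : ℕ → Ω → 𝒴)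
    (hmeas : ∀ n, Measurable (Y n)) (hstat : StationaryProc μ Y)
    (k : ℕ) (r : (Fin k → 𝒴) → 𝒴) :
    mutInfOf μ (Y k) (fun ω => r (procSeg Y 0 k ω)) ≤ mutInfOf μ (Y k) (procSeg Y 0 k) ∧
    (- Real.log (Finset.univ.sup' Finset.univ_nonempty (fun y => prOf μ (Y 0) y))) *
        (1 - (μ {ω | r (procSeg Y 0 k ω) ≠ Y k ω}).toReal) -
      (Real.negMulLog ((μ {ω | r (procSeg Y 0 k ω) ≠ Y k ω}).toReal) +
        Real.negMulLog (1 - (μ {ω | r (procSeg Y 0 k ω) ≠ Y k ω}).toReal)) ≤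
      mutInfOf μ (Y k) (fun ω => r (procSeg Y 0 k ω)) := by
  have hseg := measurable_procSeg hmeas 0 k
  refine ⟨mutInfOf_comp_le μ (hmeas k) hseg r, ?_⟩
  rw [← binEntropy_eq_negMulLog_add_negMulLog_one_sub]
  refine neg_log_mul_sub_binEntropy_le_mutInfOf μ (hmeas k)
    ((measurable_of_finite r).comp hseg) fun y => ?_
  rw [prOf_eq_of_map_eq μ (hmeas k) (hmeas 0) (hstat.map_eq_map_zero hmeas k)]
  exact le_sup' _ (mem_univ y)

/-- generalized Fano inequality: for a stationary process `Y` on a finite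
alphabet and any predictor r : 𝒴^k → 𝒴 with error probability P_e = Pr(r(Y_1^k) ≠ Y_{k+1}),
I(Y_{k+1} ; Y_1^k) ≥ I(Y_{k+1} ; r(Y_1^k)) ≥ −log(max_y p_Y(y)) (1 − P_e) − h(P_e),
where h is the binary entropy function. -/
theorem stmt8 {Ω : Type*} [MeasurableSpace Ω]
    {𝒴 : Type*} [Fintype 𝒴] [DecidableEq 𝒴] [Nonempty 𝒴]
    [MeasurableSpace 𝒴] [MeasurableSingletonClass 𝒴]
    (μ : Measure Ω) [IsProbabilityMeasure μ] (Y : ℕ → Ω → 𝒴)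
    (hmeas : ∀ n, Measurable (Y n)) (hstat : StationaryProc μ Y)
    (k : ℕ) (r : (Fin k → 𝒴) → 𝒴) :
    mutInfOf μ (Y k) (fun ω => r (procSeg Y 0 k ω)) ≤ mutInfOf μ (Y k) (procSeg Y 0 k) ∧
    (- Real.log (Finset.univ.sup' Finset.univ_nonempty (fun y => prOf μ (Y 0) y))) *
        (1 - (μ {ω | r (procSeg Y 0 k ω) ≠ Y k ω}).toReal) -
      (Real.negMulLog ((μ {ω | r (procSeg Y 0 k ω) ≠ Y k ω}).toReal) +
        Real.negMulLog (1 - (μ {ω | r (procSeg Y 0 k ω) ≠ Y k ω}).toReal)) ≤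
      mutInfOf μ (Y k) (fun ω => r (procSeg Y 0 k ω)) :=
  stmt8_general μ Y hmeas hstat k r
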